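/- arXiv:0909.4690 — 2 statements merged into one kernel-verified Lean document; each statement's English description precedes it below -/
import Mathlib

section
/- Let X be a compact complex manifold on which every global holomorphic 1-form is closed. Then the set 𝔥¹ of holomorphic vector fields v on X satisfying α(v) = 0 for every global holomorphic 1-form α is a Lie ideal of the Lie algebra 𝔥 of all holomorphic vector fields, and it contains the derived subalgebra [𝔥, 𝔥]. -/
open scoped Manifold
open Bundle

noncomputable section

/-- A holomorphic vector field on a complex manifold. -/
def IsHolVectorField {E : Type*} [NormedAddCommGroup E] [NormedSpace ℂ E]
    {H : Type*} [TopologicalSpace H] (I : ModelWithCorners ℂ E H)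
    {X : Type*} [TopologicalSpace X] [ChartedSpace H X] [IsManifold I (⊤ : ℕ∞) X]
    (v : ∀ x : X, TangentSpace I x) : Prop :=
  MDifferentiable I I.tangent (fun x => (⟨x, v x⟩ : TangentBundle I X))

/-- A holomorphic 1-form on a complex manifold. -/
def IsHolOneForm {E : Type*} [NormedAddCommGroup E] [NormedSpace ℂ E]
    {H : Type*} [TopologicalSpace H] (I : ModelWithCorners ℂ E H)
    {X : Type*} [TopologicalSpace X] [ChartedSpace H X] [IsManifold I (⊤ : ℕ∞) X]
    (α : ∀ x : X, TangentSpace I x →L[ℂ] ℂ) : Prop :=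
  MDifferentiable I.tangent 𝓘(ℂ, ℂ) (fun p : TangentBundle I X => α p.proj p.2)

/-- The derivative of a function `f : X → ℂ` along a vector field `v`. -/
def dirDeriv {E : Type*} [NormedAddCommGroup E] [NormedSpace ℂ E]
    {H : Type*} [TopologicalSpace H] (I : ModelWithCorners ℂ E H)
    {X : Type*} [TopologicalSpace X] [ChartedSpace H X] [IsManifold I (⊤ : ℕ∞) X]
    (f : X → ℂ) (v : ∀ x : X, TangentSpace I x) (x : X) : ℂ :=
  mfderiv I 𝓘(ℂ, ℂ) f x (v x)

/-!
A holomorphic 1-form `α` pairs with a holomorphic vector field `v` to a holomorphic function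
`α(v)` on `X`; as `X` is compact, `α(v)` is locally constant, so all its directional derivatives
vanish. The Cartan formula then gives `α([v, w]) = v(α(w)) - w(α(v)) = 0` for all `v, w ∈ 𝔥`,
i.e. `[𝔥, 𝔥] ⊆ 𝔥¹`, and a subspace containing `[𝔥, 𝔥]` is automatically an ideal.
-/

section

variable {E : Type*} [NormedAddCommGroup E] [NormedSpace ℂ E]
  {H : Type*} [TopologicalSpace H] {I : ModelWithCorners ℂ E H}
  {X : Type*} [TopologicalSpace X] [ChartedSpace H X] [IsManifold I (⊤ : ℕ∞) X]

theorem dirDeriv_eq_zero_of_isLocallyConstant {f : X → ℂ} (hf : IsLocallyConstant f)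
    (v : ∀ x : X, TangentSpace I x) (x : X) : dirDeriv I f v x = 0 := by
  have hconst : f =ᶠ[nhds x] fun _ => f x := hf.eventually_eq x
  rw [dirDeriv, hconst.mfderiv_eq, mfderiv_const]
  rfl

theorem IsHolOneForm.isLocallyConstant_apply [I.Boundaryless] [CompactSpace X]
    {α : ∀ x : X, TangentSpace I x →L[ℂ] ℂ} (hα : IsHolOneForm I α)
    {v : ∀ x : X, TangentSpace I x} (hv : IsHolVectorField I v) :
    IsLocallyConstant fun y => α y (v y) :=
  MDifferentiable.isLocallyConstant (hα.comp hv)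

end

/-- Let `X` be a compact complex manifold on which every global holomorphic 1-form is
closed (expressed by the Cartan formula `α([v,w]) = v(α(w)) - w(α(v))` for all global
holomorphic 1-forms `α` and holomorphic vector fields `v`, `w`, where `bkt v w = [v, w]`
is the Lie bracket of vector fields).  Then the set `𝔥¹` of holomorphic vector fields `v`
with `α(v) = 0` for every global holomorphic 1-form `α` is a Lie ideal of the Lie algebra
`𝔥` of holomorphic vector fields, and it contains the derived subalgebra `[𝔥, 𝔥]`. -/
theorem stmt7 {E : Type*} [NormedAddCommGroup E] [NormedSpace ℂ E]
    {H : Type*} [TopologicalSpace H] (I : ModelWithCorners ℂ E H) [I.Boundaryless]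
    (X : Type*) [TopologicalSpace X] [ChartedSpace H X] [IsManifold I (⊤ : ℕ∞) X]
    [CompactSpace X]
    -- the Lie bracket of vector fields on `X`
    (bkt : (∀ x : X, TangentSpace I x) → (∀ x : X, TangentSpace I x) →
      (∀ x : X, TangentSpace I x))
    -- the bracket of holomorphic vector fields is holomorphic (`𝔥` is a Lie algebra)
    (hbkt : ∀ v w, IsHolVectorField I v → IsHolVectorField I w →
      IsHolVectorField I (bkt v w))
    -- every global holomorphic 1-form is closed: the Cartan formula for closed forms
    (hclosed : ∀ α, IsHolOneForm I α → ∀ v w, IsHolVectorField I v →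
      IsHolVectorField I w → ∀ x : X,
        α x (bkt v w x)
          = dirDeriv I (fun y => α y (w y)) v x - dirDeriv I (fun y => α y (v y)) w x) :
    -- `𝔥¹ = {v holomorphic | α(v) = 0 for all holomorphic 1-forms α}` is a Lie ideal of `𝔥`
    (∀ v w, IsHolVectorField I v →
      (IsHolVectorField I w ∧ (∀ α, IsHolOneForm I α → ∀ x : X, α x (w x) = 0)) →
      (IsHolVectorField I (bkt v w) ∧
        (∀ α, IsHolOneForm I α → ∀ x : X, α x (bkt v w x) = 0))) ∧
    -- and `𝔥¹` contains the derived subalgebra `[𝔥, 𝔥]`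
    (∀ v w, IsHolVectorField I v → IsHolVectorField I w →
      (IsHolVectorField I (bkt v w) ∧
        (∀ α, IsHolOneForm I α → ∀ x : X, α x (bkt v w x) = 0))) := by
  have derived_le : ∀ v w, IsHolVectorField I v → IsHolVectorField I w →
      IsHolVectorField I (bkt v w) ∧
        (∀ α, IsHolOneForm I α → ∀ x : X, α x (bkt v w x) = 0) := by
    intro v w hv hw
    refine ⟨hbkt v w hv hw, fun α hα x => ?_⟩
    rw [hclosed α hα v w hv hw x,
      dirDeriv_eq_zero_of_isLocallyConstant (hα.isLocallyConstant_apply hw),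
      dirDeriv_eq_zero_of_isLocallyConstant (hα.isLocallyConstant_apply hv), sub_zero]
  exact ⟨fun v w hv hw => derived_le v w hv hw.1, derived_le⟩
end
end

section
/- (Poincaré reducibility) Let A be an abelian variety over ℂ and B ⊆ A an abelian subvariety. Then there exists an abelian subvariety Z ⊆ A such that B ∩ Z is finite and B + Z = A; equivalently, the addition map B × Z → A is an isogeny. -/
/-!
The complement is the `Hm`-orthogonal complement `W'` of `W`. Because `W` is a complex subspace,
`W'` is also the orthogonal complement of `W` for the real alternating form `E = Im Hm`, and
positivity of `Hm` makes `E` nondegenerate on `W`, so `W` and `W'` are complementary.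
Since `W` is spanned by lattice vectors and `E` is integral on `Λ`, in the coordinates given by
`b` the subspace `W'` is the solution space of a system of linear equations with integer
coefficients. Such a solution space is spanned by rational solutions, hence, after clearing
denominators, by lattice points.
-/

open Module Submodule Matrix

namespace Matrix

variable {κ ι : Type*} [Fintype ι]

theorem comp_mem_ker_mulVecLin_of_mem_ker_map {K L : Type*} [CommRing K] [CommRing L]
    [Algebra K L] {A : Matrix κ ι K} {x : ι → L}
    (hx : x ∈ LinearMap.ker (A.map (algebraMap K L)).mulVecLin) (ψ : L →ₗ[K] K) :
    ψ ∘ x ∈ LinearMap.ker A.mulVecLin := by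
  ext k
  have hx0 : A.map (algebraMap K L) *ᵥ x = 0 := hx
  simpa [mulVec, dotProduct, ← Algebra.smul_def] using congrArg (fun v => ψ (v k)) hx0

theorem ker_mulVecLin_map_algebraMap {K L : Type*} [Field K] [CommRing L] [Algebra K L]
    (A : Matrix κ ι K) :
    LinearMap.ker (A.map (algebraMap K L)).mulVecLin =
      span L ((algebraMap K L ∘ ·) '' LinearMap.ker A.mulVecLin) := by
  classical
  refine le_antisymm (fun x hx => ?_) (span_le.2 ?_)
  · -- Expanding the coordinates of `x` in a `K`-basis `B` of `L` writes `x` as an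
    -- `L`-combination of the vectors `B.coord β ∘ x`, which lie in the kernel over `K`.
    let B := Basis.ofVectorSpace K L
    let s := Finset.univ.biUnion fun i => (B.repr (x i)).support
    have hx_eq : x = ∑ β ∈ s, B β • (algebraMap K L ∘ (B.coord β ∘ x)) := by
      ext i
      have hsupp : (B.repr (x i)).support ⊆ s :=
        Finset.subset_biUnion_of_mem (fun i => (B.repr (x i)).support) (Finset.mem_univ i)
      conv_lhs => rw [← B.linearCombination_repr (x i), Finsupp.linearCombination_apply,
        Finsupp.sum_of_support_subset _ hsupp _ (by simp)]
      simp [Finset.sum_apply, Algebra.smul_def, mul_comm]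
    rw [hx_eq]
    exact sum_mem fun β _ =>
      smul_mem _ _ (subset_span ⟨_, comp_mem_ker_mulVecLin_of_mem_ker_map hx _, rfl⟩)
  · rintro _ ⟨v, hv, rfl⟩
    ext k
    simpa [RingHom.map_mulVec] using congrArg (algebraMap K L) (congrFun hv k)

theorem span_ker_mulVecLin_inter_range_intCast {L : Type*} [Field L] [CharZero L]
    (A : Matrix κ ι ℤ) :
    span L ((LinearMap.ker (A.map ((↑) : ℤ → L)).mulVecLin : Set (ι → L)) ∩
        Set.range (((↑) : ℤ → L) ∘ ·)) =
      LinearMap.ker (A.map ((↑) : ℤ → L)).mulVecLin := by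
  set S := LinearMap.ker (A.map ((↑) : ℤ → L)).mulVecLin
  have hS : S =
      span L ((algebraMap ℚ L ∘ ·) '' LinearMap.ker (A.map ((↑) : ℤ → ℚ)).mulVecLin) := by
    rw [← ker_mulVecLin_map_algebraMap, map_map,
      show algebraMap ℚ L ∘ ((↑) : ℤ → ℚ) = (↑) by ext; simp]
  refine le_antisymm (span_le.2 Set.inter_subset_left) ?_
  conv_lhs => rw [hS]
  rw [span_le]
  rintro _ ⟨q, hq, rfl⟩
  have hqS : algebraMap ℚ L ∘ q ∈ S := hS ▸ subset_span ⟨q, hq, rfl⟩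
  obtain ⟨⟨N, hN⟩, hNq⟩ :=
    IsLocalization.exist_integer_multiples_of_finite (nonZeroDivisors ℤ) q
  choose z hz using hNq
  have hN0 : (N : L) ≠ 0 := by exact_mod_cast nonZeroDivisors.ne_zero hN
  have hzq : ((↑) : ℤ → L) ∘ z = (N : L) • (algebraMap ℚ L ∘ q) := by
    ext i
    simpa using congrArg ((↑) : ℚ → L) (hz i)
  dsimp only
  rw [show algebraMap ℚ L ∘ q = (N : L)⁻¹ • (((↑) : ℤ → L) ∘ z) by
    rw [hzq, inv_smul_smul₀ hN0]]
  exact smul_mem _ _ (subset_span ⟨hzq ▸ smul_mem _ _ hqS, z, rfl⟩)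

end Matrix

theorem Module.Basis.span_iInf_ker_inter_span_int {ι κ L V : Type*} [Fintype ι] [Field L]
    [CharZero L] [AddCommGroup V] [Module L V] (b : Basis ι L V) (φ : κ → Dual L V)
    (hφ : ∀ k i, ∃ m : ℤ, φ k (b i) = m) :
    span L (((⨅ k, LinearMap.ker (φ k) : Submodule L V) : Set V) ∩ span ℤ (Set.range b)) =
      ⨅ k, LinearMap.ker (φ k) := by
  choose A hA using hφ
  let A : Matrix κ ι ℤ := of A
  let e := b.equivFun
  have hker : ⨅ k, LinearMap.ker (φ k) =
      (LinearMap.ker (A.map ((↑) : ℤ → L)).mulVecLin).comap e.toLinearMap := by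
    ext y
    have hy : ∀ k, φ k y = (A.map ((↑) : ℤ → L) *ᵥ e y) k := fun k => by
      conv_lhs => rw [← b.sum_equivFun y]
      simp only [map_sum, map_smul, hA, smul_eq_mul]
      simp [mulVec, dotProduct, mul_comm, e, A]
    simp [mem_iInf, hy, funext_iff]
  have hlattice :
      (span ℤ (Set.range b) : Set V) = e ⁻¹' Set.range (((↑) : ℤ → L) ∘ ·) := by
    ext y
    simp [b.mem_span_iff_repr_mem ℤ, e, funext_iff, Classical.skolem]
  rw [hker, hlattice, comap_coe, LinearEquiv.coe_coe, ← Set.preimage_inter,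
    ← e.image_symm_eq_preimage, ← LinearEquiv.coe_coe, span_image,
    span_ker_mulVecLin_inter_range_intCast, map_equiv_eq_comap_symm, e.symm_symm]

theorem LinearMap.BilinForm.orthogonal_span_eq_iInf_ker {R M : Type*} [CommRing R]
    [AddCommGroup M] [Module R M] (B : LinearMap.BilinForm R M) (S : Set M) :
    B.orthogonal (span R S) = ⨅ s : S, LinearMap.ker (B s) := by
  ext x
  have h := span_le (s := S) (p := LinearMap.ker (B.flip x))
  simp only [SetLike.le_def, Set.subset_def, LinearMap.mem_ker] at h
  simpa [LinearMap.BilinForm.mem_orthogonal_iff] using h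

namespace LinearMap

variable {V : Type*} [AddCommGroup V] [Module ℂ V] (Hm : V →ₗ⋆[ℂ] V →ₗ[ℂ] ℂ)

def imBilinForm : LinearMap.BilinForm ℝ V :=
  mk₂ ℝ (fun x y => (Hm x y).im) (by simp) (by simp [← Complex.coe_smul]) (by simp) (by simp)

@[simp]
theorem imBilinForm_apply (x y : V) : Hm.imBilinForm x y = (Hm x y).im := rfl

theorem restrictScalars_orthogonalBilin (W : Submodule ℂ V) :
    (W.orthogonalBilin Hm).restrictScalars ℝ =
      Hm.imBilinForm.orthogonal (W.restrictScalars ℝ) := by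
  ext x
  simp only [Submodule.restrictScalars_mem, mem_orthogonalBilin_iff, BilinForm.mem_orthogonal_iff,
    imBilinForm_apply]
  refine ⟨fun h w hw => by simp [h w hw], fun h w hw => Complex.ext ?_ (h w hw)⟩
  simpa using h (Complex.I • w) (W.smul_mem _ hw)

variable {Hm}

theorem imBilinForm_isRefl (hsymm : ∀ v w : V, Hm w v = starRingEnd ℂ (Hm v w)) :
    Hm.imBilinForm.IsRefl := fun x y h => by
  simpa [hsymm x y] using h

theorem imBilinForm_restrict_separatingLeft (hpos : ∀ v : V, v ≠ 0 → 0 < (Hm v v).re)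
    (W : Submodule ℂ V) : (Hm.imBilinForm.restrict (W.restrictScalars ℝ)).SeparatingLeft := by
  rintro ⟨w, hw⟩ h
  have hre : (Hm w w).re = 0 := by simpa using h ⟨Complex.I • w, W.smul_mem _ hw⟩
  by_contra hne
  exact (hpos w fun h0 => hne (Subtype.ext h0)).ne' hre

theorem isCompl_orthogonalBilin [FiniteDimensional ℝ V]
    (hsymm : ∀ v w : V, Hm w v = starRingEnd ℂ (Hm v w))
    (hpos : ∀ v : V, v ≠ 0 → 0 < (Hm v v).re) (W : Submodule ℂ V) :
    IsCompl W (W.orthogonalBilin Hm) := by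
  rw [← isCompl_restrictScalars_iff ℝ, restrictScalars_orthogonalBilin]
  exact BilinForm.isCompl_orthogonal_of_restrict_nondegenerate (imBilinForm_isRefl hsymm)
    (.ofSeparatingLeft (imBilinForm_restrict_separatingLeft hpos W))

end LinearMap

/-- **Poincaré reducibility**, stated at the level of lattices and complex subspaces.
An abelian variety is `A = V/Λ` where `V = ℂ^g`, `Λ` is a lattice (the `ℤ`-span of an
`ℝ`-basis of `V`), together with a polarization: a positive definite hermitian form `Hm`
on `V` whose imaginary part is integer valued on `Λ`.  An abelian subvariety `B ⊆ A`
corresponds to a complex subspace `W ⊆ V` with `W = spanℝ(W ∩ Λ)` (so `W ∩ Λ` is a lattice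
of `W` and `B = W/(W ∩ Λ)`).  The theorem asserts the existence of a complementary abelian
subvariety `Z = W'/(W' ∩ Λ)`: a complex subspace `W'` defined over the lattice with
`W ∩ W' = 0` and `W + W' = V`; equivalently `B ∩ Z` is finite, `B + Z = A`, and the
addition map `B × Z → A` is an isogeny. -/
theorem stmt17 (g : ℕ)
    (b : Module.Basis (Fin (2 * g)) ℝ (Fin g → ℂ))
    (Λ : AddSubgroup (Fin g → ℂ)) (hΛ : Λ = AddSubgroup.closure (Set.range b))
    (Hm : (Fin g → ℂ) →ₗ⋆[ℂ] ((Fin g → ℂ) →ₗ[ℂ] ℂ))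
    (hsymm : ∀ v w : Fin g → ℂ, Hm w v = starRingEnd ℂ (Hm v w))
    (hpos : ∀ v : Fin g → ℂ, v ≠ 0 → 0 < (Hm v v).re)
    (hint : ∀ x ∈ Λ, ∀ y ∈ Λ, ∃ m : ℤ, (Hm x y).im = m)
    (W : Submodule ℂ (Fin g → ℂ))
    (hW : Submodule.span ℝ ((W : Set (Fin g → ℂ)) ∩ (Λ : Set (Fin g → ℂ)))
      = W.restrictScalars ℝ) :
    ∃ W' : Submodule ℂ (Fin g → ℂ),
      Submodule.span ℝ ((W' : Set (Fin g → ℂ)) ∩ (Λ : Set (Fin g → ℂ)))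
        = W'.restrictScalars ℝ ∧
      W ⊓ W' = ⊥ ∧ W ⊔ W' = ⊤ := by
  have hΛ' : (Λ : Set (Fin g → ℂ)) = span ℤ (Set.range b) := by
    rw [hΛ, ← span_int_eq_addSubgroupClosure]
    rfl
  have hcompl := LinearMap.isCompl_orthogonalBilin hsymm hpos W
  refine ⟨W.orthogonalBilin Hm, ?_, hcompl.inf_eq_bot, hcompl.sup_eq_top⟩
  rw [← coe_restrictScalars ℝ, LinearMap.restrictScalars_orthogonalBilin, ← hW,
    LinearMap.BilinForm.orthogonal_span_eq_iInf_ker, hΛ']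
  have hmem : ∀ x ∈ span ℤ (Set.range b), x ∈ Λ := fun x hx => by
    rwa [← SetLike.mem_coe, hΛ']
  exact b.span_iInf_ker_inter_span_int _ fun s i =>
    hint s (hmem s s.2.2) (b i) (hmem _ (subset_span ⟨i, rfl⟩))
end
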